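/- Under the standing assumptions, if u_λ ∈ N_λ achieves m_λ = inf_{N_λ} J_λ, then u_λ is a critical point of J_λ: J_λ'(u_λ)φ = 0 for every φ ∈ E_λ. Hence u_λ is a ground state solution of Δ²u − Δu + (λa+1)u = |u|^{p−2}u on V. -/

import Mathlib

/-!
Fix `φ ∈ E_λ` and put `A s = ‖u + s φ‖²_{E_λ}` and `B s = ∫ |u + s φ|^p`. Wherever both are
positive, `t • (u + s φ)` with `t ^ (p - 2) = A s / B s` lies on the Nehari manifold, on which
`J_λ = (1/2 - 1/p) ‖·‖²`; minimality of `u` thus gives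
`(p - 2) log ‖u‖² ≤ p log (A s) - 2 log (B s)`, with equality at `s = 0` because
`A 0 = B 0 = ‖u‖²`. Hence `p A'(0) = 2 B'(0)`, which is `J_λ'(u) φ = 0`. Differentiating `B`
under the sum is legitimate because `μ ≥ μmin > 0` makes `E_λ`-functions uniformly bounded.
-/

open Filter Topology

structure GraphData (V : Type*) where
  ω : V → V → ℝ
  μ : V → ℝ
  sym : ∀ x y, ω x y = ω y x
  nonneg : ∀ x y, 0 ≤ ω x y
  loopless : ∀ x, ω x x = 0
  locfin : ∀ x, {y | ω x y ≠ 0}.Finite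
  μpos : ∀ x, 0 < μ x

variable {V : Type*}

noncomputable def GraphData.lap (g : GraphData V) (u : V → ℝ) (x : V) : ℝ :=
  (1 / g.μ x) * ∑' y, g.ω x y * (u y - u x)

noncomputable def GraphData.grad (g : GraphData V) (u v : V → ℝ) (x : V) : ℝ :=
  (1 / (2 * g.μ x)) * ∑' y, g.ω x y * (u y - u x) * (v y - v x)

noncomputable def GraphData.integral (g : GraphData V) (f : V → ℝ) : ℝ :=
  ∑' x, g.μ x * f x

def GraphData.G (g : GraphData V) : SimpleGraph V where
  Adj x y := 0 < g.ω x y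
  symm := ⟨fun x y (h : 0 < g.ω x y) => show 0 < g.ω y x by rwa [g.sym y x]⟩
  loopless := ⟨fun x (h : 0 < g.ω x x) => by simp [g.loopless x] at h⟩

noncomputable def GraphData.enormSq (g : GraphData V) (a : V → ℝ) (lam : ℝ) (u : V → ℝ) : ℝ :=
  ∑' x, g.μ x * ((g.lap u x) ^ 2 + g.grad u u x + (lam * a x + 1) * (u x) ^ 2)

def GraphData.memE (g : GraphData V) (a : V → ℝ) (lam : ℝ) (u : V → ℝ) : Prop :=
  Summable fun x => g.μ x * ((g.lap u x) ^ 2 + g.grad u u x + (lam * a x + 1) * (u x) ^ 2)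

noncomputable def GraphData.lpInt (g : GraphData V) (p : ℝ) (u : V → ℝ) : ℝ :=
  ∑' x, g.μ x * |u x| ^ p

noncomputable def GraphData.Jlam (g : GraphData V) (a : V → ℝ) (lam p : ℝ) (u : V → ℝ) : ℝ :=
  (1 / 2) * g.enormSq a lam u - (1 / p) * g.lpInt p u

def GraphData.Nehari (g : GraphData V) (a : V → ℝ) (lam p : ℝ) : Set (V → ℝ) :=
  {u | u ≠ 0 ∧ g.memE a lam u ∧ g.enormSq a lam u = g.lpInt p u}

noncomputable def GraphData.Jderiv (g : GraphData V) (a : V → ℝ) (lam p : ℝ) (u φ : V → ℝ) : ℝ :=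
  (∑' x, g.μ x * (g.lap u x * g.lap φ x + g.grad u φ x + (lam * a x + 1) * u x * φ x))
    - ∑' x, g.μ x * (|u x| ^ (p - 2) * u x * φ x)

def GraphData.bdry (g : GraphData V) (Ω : Set V) : Set V :=
  {y | y ∉ Ω ∧ ∃ x ∈ Ω, 0 < g.ω x y}

noncomputable def GraphData.hnormSq (g : GraphData V) (Ω : Set V) (u : V → ℝ) : ℝ :=
  (∑' x : ↥(Ω ∪ g.bdry Ω), g.μ x * ((g.lap u x) ^ 2 + g.grad u u x))
    + ∑' x : Ω, g.μ x * (u x) ^ 2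

noncomputable def GraphData.lpIntO (g : GraphData V) (Ω : Set V) (p : ℝ) (u : V → ℝ) : ℝ :=
  ∑' x : Ω, g.μ x * |u x| ^ p

noncomputable def GraphData.JOmega (g : GraphData V) (Ω : Set V) (p : ℝ) (u : V → ℝ) : ℝ :=
  (1 / 2) * g.hnormSq Ω u - (1 / p) * g.lpIntO Ω p u

def GraphData.memH (g : GraphData V) (Ω : Set V) (u : V → ℝ) : Prop :=
  ∀ x ∉ Ω, u x = 0

def GraphData.NehariO (g : GraphData V) (Ω : Set V) (p : ℝ) : Set (V → ℝ) :=
  {u | u ≠ 0 ∧ g.memH Ω u ∧ g.hnormSq Ω u = g.lpIntO Ω p u}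

noncomputable def GraphData.JderivO (g : GraphData V) (Ω : Set V) (p : ℝ) (u φ : V → ℝ) : ℝ :=
  (∑' x : ↥(Ω ∪ g.bdry Ω), g.μ x * (g.lap u x * g.lap φ x + g.grad u φ x))
    + (∑' x : Ω, g.μ x * (u x * φ x))
    - ∑' x : Ω, g.μ x * (|u x| ^ (p - 2) * u x * φ x)

lemma abs_deriv_abs_rpow_add_mul_le {p M u φ s : ℝ} (hp : 2 ≤ p) (hs : |s| ≤ 1)
    (hM : |u| + |φ| ≤ M) :
    |p * |u + s * φ| ^ (p - 2) * (u + s * φ) * φ| ≤ p * M ^ (p - 2) * (2 * u ^ 2 + 2 * φ ^ 2) := by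
  have hy : |u + s * φ| ≤ |u| + |φ| := (abs_add_le _ _).trans (by
    rw [abs_mul]; nlinarith [abs_nonneg φ, abs_nonneg s])
  have hyp : |u + s * φ| ^ (p - 2) ≤ M ^ (p - 2) :=
    Real.rpow_le_rpow (abs_nonneg _) (hy.trans hM) (by linarith)
  have hMp : 0 ≤ M ^ (p - 2) := (Real.rpow_nonneg (abs_nonneg _) _).trans hyp
  rw [abs_mul, abs_mul, abs_mul, abs_of_nonneg (by linarith : (0 : ℝ) ≤ p),
    abs_of_nonneg (Real.rpow_nonneg (abs_nonneg _) _), mul_assoc p, mul_assoc p, mul_assoc p]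
  refine mul_le_mul_of_nonneg_left ?_ (by linarith)
  calc |u + s * φ| ^ (p - 2) * |u + s * φ| * |φ|
      = |u + s * φ| ^ (p - 2) * (|u + s * φ| * |φ|) := mul_assoc _ _ _
    _ ≤ M ^ (p - 2) * ((|u| + |φ|) * (|u| + |φ|)) :=
        mul_le_mul hyp (mul_le_mul hy (le_add_of_nonneg_left (abs_nonneg u)) (abs_nonneg _)
          (by positivity)) (by positivity) hMp
    _ ≤ M ^ (p - 2) * (2 * u ^ 2 + 2 * φ ^ 2) := by
      gcongr
      nlinarith [sq_abs u, sq_abs φ, sq_nonneg (|u| - |φ|)]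

theorem hasDerivAt_tsum_mul_abs_add_mul_rpow {ι : Type*} {w u φ : ι → ℝ} {p M : ℝ}
    (hp : 2 ≤ p) (hw : ∀ i, 0 ≤ w i) (hM : ∀ i, |u i| + |φ i| ≤ M)
    (hu : Summable fun i => w i * u i ^ 2) (hφ : Summable fun i => w i * φ i ^ 2) :
    HasDerivAt (fun s => ∑' i, w i * |u i + s * φ i| ^ p)
      (p * ∑' i, w i * (|u i| ^ (p - 2) * u i * φ i)) 0 := by
  have hderiv (i : ι) (s : ℝ) : HasDerivAt (fun s => w i * |u i + s * φ i| ^ p)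
      (w i * (p * |u i + s * φ i| ^ (p - 2) * (u i + s * φ i) * φ i)) s := by
    have hline : HasDerivAt (fun s => u i + s * φ i) (φ i) s := by
      simpa using ((hasDerivAt_id s).mul_const (φ i)).const_add (u i)
    exact ((hasDerivAt_abs_rpow _ (by linarith)).comp s hline).const_mul (w i)
  have hbound (i : ι) (s : ℝ) (hs : s ∈ Metric.ball (0 : ℝ) 1) :
      ‖w i * (p * |u i + s * φ i| ^ (p - 2) * (u i + s * φ i) * φ i)‖
        ≤ p * M ^ (p - 2) * (2 * (w i * u i ^ 2) + 2 * (w i * φ i ^ 2)) := by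
    have hs1 : |s| ≤ 1 := by
      rw [Metric.mem_ball, Real.dist_eq, sub_zero] at hs; exact hs.le
    rw [Real.norm_eq_abs, abs_mul, abs_of_nonneg (hw i)]
    calc w i * |p * |u i + s * φ i| ^ (p - 2) * (u i + s * φ i) * φ i|
        ≤ w i * (p * M ^ (p - 2) * (2 * u i ^ 2 + 2 * φ i ^ 2)) :=
          mul_le_mul_of_nonneg_left (abs_deriv_abs_rpow_add_mul_le hp hs1 (hM i)) (hw i)
      _ = _ := by ring
  have hsummable₀ : Summable fun i => w i * |u i + 0 * φ i| ^ p := by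
    refine (hu.mul_left (M ^ (p - 2))).of_nonneg_of_le
      (fun i => mul_nonneg (hw i) (Real.rpow_nonneg (abs_nonneg _) _)) fun i => ?_
    have hup : |u i| ^ p = |u i| ^ (p - 2) * u i ^ 2 := by
      rw [← sq_abs, ← Real.rpow_natCast, ← Real.rpow_add' (abs_nonneg _) (by norm_num; linarith)]
      norm_num
    rw [zero_mul, add_zero, hup, mul_left_comm]
    exact mul_le_mul_of_nonneg_right (Real.rpow_le_rpow (abs_nonneg _)
      ((le_add_of_nonneg_right (abs_nonneg _)).trans (hM i)) (by linarith))
      (mul_nonneg (hw i) (sq_nonneg _))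
  have hball := Metric.mem_ball_self (x := (0 : ℝ)) one_pos
  refine (hasDerivAt_tsum_of_isPreconnected
    (((hu.mul_left 2).add (hφ.mul_left 2)).mul_left (p * M ^ (p - 2))) Metric.isOpen_ball
    (convex_ball (0 : ℝ) 1).isPreconnected (fun i s _ => hderiv i s) hbound hball hsummable₀
    hball).congr_deriv ?_
  rw [← tsum_mul_left]
  exact tsum_congr fun i => by simp only [zero_mul, add_zero]; ring

namespace GraphData

variable (g : GraphData V)

lemma tsum_ω_mul_linear_comb (x : V) (F G : V → ℝ) (b c : ℝ) :
    ∑' y, g.ω x y * (b * F y + c * G y)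
      = b * ∑' y, g.ω x y * F y + c * ∑' y, g.ω x y * G y := by
  have summable_ω_mul (H : V → ℝ) : Summable fun y => g.ω x y * H y :=
    summable_of_ne_finset_zero (s := (g.locfin x).toFinset) fun y hy => by
      rw [Set.Finite.mem_toFinset, Set.mem_ofPred_eq, not_not] at hy
      rw [hy, zero_mul]
  rw [← tsum_mul_left, ← tsum_mul_left,
    ← ((summable_ω_mul F).mul_left b).tsum_add ((summable_ω_mul G).mul_left c)]
  exact tsum_congr fun y => by ring

lemma lap_add_smul (u φ : V → ℝ) (s : ℝ) (x : V) :
    g.lap (u + s • φ) x = g.lap u x + s * g.lap φ x := by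
  have h := g.tsum_ω_mul_linear_comb x (fun y => u y - u x) (fun y => φ y - φ x) 1 s
  have e : ∀ y, g.ω x y * ((u + s • φ) y - (u + s • φ) x)
      = g.ω x y * (1 * (u y - u x) + s * (φ y - φ x)) := fun y => by
    simp only [Pi.add_apply, Pi.smul_apply, smul_eq_mul]; ring
  rw [lap, lap, lap, tsum_congr e, h]
  ring

lemma grad_add_smul (u φ : V → ℝ) (s : ℝ) (x : V) :
    g.grad (u + s • φ) (u + s • φ) x
      = g.grad u u x + 2 * s * g.grad u φ x + s ^ 2 * g.grad φ φ x := by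
  have h₁ := g.tsum_ω_mul_linear_comb x (fun y => (u y - u x) * (u y - u x))
    (fun y => 2 * ((u y - u x) * (φ y - φ x)) + s * ((φ y - φ x) * (φ y - φ x))) 1 s
  have h₂ := g.tsum_ω_mul_linear_comb x (fun y => (u y - u x) * (φ y - φ x))
    (fun y => (φ y - φ x) * (φ y - φ x)) 2 s
  have e : ∀ y, g.ω x y * ((u + s • φ) y - (u + s • φ) x) * ((u + s • φ) y - (u + s • φ) x)
      = g.ω x y * (1 * ((u y - u x) * (u y - u x))
        + s * (2 * ((u y - u x) * (φ y - φ x)) + s * ((φ y - φ x) * (φ y - φ x)))) := fun y => by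
    simp only [Pi.add_apply, Pi.smul_apply, smul_eq_mul]; ring
  rw [grad, grad, grad, grad, tsum_congr e, h₁, h₂]
  simp only [mul_assoc]
  ring

variable (a : V → ℝ) (lam : ℝ)

noncomputable def energyDensity (u v : V → ℝ) (x : V) : ℝ :=
  g.μ x * (g.lap u x * g.lap v x + g.grad u v x + (lam * a x + 1) * u x * v x)

lemma energyDensity_add_smul (u φ : V → ℝ) (s : ℝ) (x : V) :
    g.energyDensity a lam (u + s • φ) (u + s • φ) x = g.energyDensity a lam u u x
      + 2 * s * g.energyDensity a lam u φ x + s ^ 2 * g.energyDensity a lam φ φ x := by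
  simp only [energyDensity, lap_add_smul, grad_add_smul, Pi.add_apply, Pi.smul_apply,
    smul_eq_mul]
  ring

lemma energyDensity_smul (c : ℝ) (u : V → ℝ) (x : V) :
    g.energyDensity a lam (c • u) (c • u) x = c ^ 2 * g.energyDensity a lam u u x := by
  have h := g.energyDensity_add_smul a lam 0 u c x
  rw [zero_add] at h
  rw [h]
  simp [energyDensity, lap, grad]

lemma enormSq_eq_tsum (u : V → ℝ) :
    g.enormSq a lam u = ∑' x, g.energyDensity a lam u u x :=
  tsum_congr fun x => by rw [energyDensity]; ring

lemma memE_iff_summable (u : V → ℝ) :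
    g.memE a lam u ↔ Summable (g.energyDensity a lam u u) :=
  summable_congr fun x => by rw [energyDensity]; ring

variable {a lam}

lemma mul_sq_le_energyDensity (ha : ∀ x, 0 ≤ a x) (hlam : 0 ≤ lam) (u : V → ℝ) (x : V) :
    g.μ x * u x ^ 2 ≤ g.energyDensity a lam u u x := by
  have hgrad : 0 ≤ g.grad u u x := by
    refine mul_nonneg (by have := g.μpos x; positivity) (tsum_nonneg fun y => ?_)
    rw [mul_assoc]
    exact mul_nonneg (g.nonneg x y) (mul_self_nonneg _)
  have hμ := (g.μpos x).le
  have hdiff : g.energyDensity a lam u u x - g.μ x * u x ^ 2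
      = g.μ x * (g.lap u x ^ 2 + g.grad u u x + lam * a x * u x ^ 2) := by
    rw [energyDensity]; ring
  have := mul_nonneg hμ (add_nonneg (add_nonneg (sq_nonneg (g.lap u x)) hgrad)
    (mul_nonneg (mul_nonneg hlam (ha x)) (sq_nonneg (u x))))
  linarith

lemma energyDensity_self_nonneg (ha : ∀ x, 0 ≤ a x) (hlam : 0 ≤ lam) (u : V → ℝ) (x : V) :
    0 ≤ g.energyDensity a lam u u x :=
  (mul_nonneg (g.μpos x).le (sq_nonneg _)).trans (g.mul_sq_le_energyDensity ha hlam u x)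

lemma summable_energyDensity (ha : ∀ x, 0 ≤ a x) (hlam : 0 ≤ lam) {u φ : V → ℝ}
    (hu : g.memE a lam u) (hφ : g.memE a lam φ) : Summable (g.energyDensity a lam u φ) := by
  rw [memE_iff_summable] at hu hφ
  refine Summable.of_norm_bounded ((hu.add hφ).div_const 2) fun x => ?_
  -- polarization: the energy densities of `u + φ` and `u - φ` are nonnegative
  have hplus := g.energyDensity_add_smul a lam u φ 1 x
  have hminus := g.energyDensity_add_smul a lam u φ (-1) x
  have := g.energyDensity_self_nonneg ha hlam (u + (1 : ℝ) • φ) x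
  have := g.energyDensity_self_nonneg ha hlam (u + (-1 : ℝ) • φ) x
  rw [Real.norm_eq_abs, abs_le]
  constructor <;> linarith

lemma memE_add_smul (ha : ∀ x, 0 ≤ a x) (hlam : 0 ≤ lam) {u φ : V → ℝ}
    (hu : g.memE a lam u) (hφ : g.memE a lam φ) (s : ℝ) : g.memE a lam (u + s • φ) := by
  have huφ := g.summable_energyDensity ha hlam hu hφ
  rw [memE_iff_summable] at hu hφ ⊢
  exact ((hu.add (huφ.mul_left (2 * s))).add (hφ.mul_left (s ^ 2))).congr fun x =>
    (g.energyDensity_add_smul a lam u φ s x).symm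

lemma enormSq_add_smul (ha : ∀ x, 0 ≤ a x) (hlam : 0 ≤ lam) {u φ : V → ℝ}
    (hu : g.memE a lam u) (hφ : g.memE a lam φ) (s : ℝ) :
    g.enormSq a lam (u + s • φ) = g.enormSq a lam u
      + 2 * s * ∑' x, g.energyDensity a lam u φ x + s ^ 2 * g.enormSq a lam φ := by
  have huφ := g.summable_energyDensity ha hlam hu hφ
  rw [memE_iff_summable] at hu hφ
  simp only [enormSq_eq_tsum, energyDensity_add_smul]
  rw [(hu.add (huφ.mul_left _)).tsum_add (hφ.mul_left _), hu.tsum_add (huφ.mul_left _),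
    tsum_mul_left, tsum_mul_left]

lemma memE_smul {u : V → ℝ} (hu : g.memE a lam u) (c : ℝ) : g.memE a lam (c • u) := by
  rw [memE_iff_summable] at hu ⊢
  exact (hu.mul_left (c ^ 2)).congr fun x => (g.energyDensity_smul a lam c u x).symm

lemma enormSq_smul (c : ℝ) (u : V → ℝ) : g.enormSq a lam (c • u) = c ^ 2 * g.enormSq a lam u := by
  simp only [enormSq_eq_tsum, energyDensity_smul, tsum_mul_left]

lemma enormSq_pos (ha : ∀ x, 0 ≤ a x) (hlam : 0 ≤ lam) {u : V → ℝ} (hu : g.memE a lam u)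
    (hu0 : u ≠ 0) : 0 < g.enormSq a lam u := by
  obtain ⟨x, hx⟩ := Function.ne_iff.mp hu0
  rw [memE_iff_summable] at hu
  rw [enormSq_eq_tsum]
  calc 0 < g.μ x * u x ^ 2 := mul_pos (g.μpos x) (pow_pos (abs_pos.mpr hx) 2 |>.trans_eq (sq_abs _))
    _ ≤ g.energyDensity a lam u u x := g.mul_sq_le_energyDensity ha hlam u x
    _ ≤ _ := hu.le_tsum x fun y _ => g.energyDensity_self_nonneg ha hlam u y

lemma summable_μ_mul_sq (ha : ∀ x, 0 ≤ a x) (hlam : 0 ≤ lam) {u : V → ℝ}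
    (hu : g.memE a lam u) : Summable fun x => g.μ x * u x ^ 2 := by
  rw [memE_iff_summable] at hu
  exact hu.of_nonneg_of_le (fun x => mul_nonneg (g.μpos x).le (sq_nonneg _))
    (g.mul_sq_le_energyDensity ha hlam u)

lemma abs_le_sqrt_enormSq_div (ha : ∀ x, 0 ≤ a x) (hlam : 0 ≤ lam) {μmin : ℝ}
    (hμmin : 0 < μmin) (hμ : ∀ x, μmin ≤ g.μ x) {u : V → ℝ} (hu : g.memE a lam u) (x : V) :
    |u x| ≤ √(g.enormSq a lam u / μmin) := by
  rw [← Real.sqrt_sq_eq_abs]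
  refine Real.sqrt_le_sqrt ((le_div_iff₀ hμmin).mpr ?_)
  rw [memE_iff_summable] at hu
  calc u x ^ 2 * μmin ≤ g.μ x * u x ^ 2 := by nlinarith [hμ x, sq_nonneg (u x)]
    _ ≤ g.energyDensity a lam u u x := g.mul_sq_le_energyDensity ha hlam u x
    _ ≤ g.enormSq a lam u := by
      rw [enormSq_eq_tsum]
      exact hu.le_tsum x fun y _ => g.energyDensity_self_nonneg ha hlam u y

lemma hasDerivAt_enormSq_add_smul (ha : ∀ x, 0 ≤ a x) (hlam : 0 ≤ lam) {u φ : V → ℝ}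
    (hu : g.memE a lam u) (hφ : g.memE a lam φ) :
    HasDerivAt (fun s : ℝ => g.enormSq a lam (u + s • φ))
      (2 * ∑' x, g.energyDensity a lam u φ x) 0 := by
  rw [funext (g.enormSq_add_smul ha hlam hu hφ)]
  refine (((((hasDerivAt_id' (0 : ℝ)).const_mul 2).mul_const _).const_add _).fun_add
    ((hasDerivAt_pow 2 (0 : ℝ)).mul_const _)).congr_deriv ?_
  simp

lemma hasDerivAt_lpInt_add_smul (ha : ∀ x, 0 ≤ a x) (hlam : 0 ≤ lam) {μmin : ℝ}
    (hμmin : 0 < μmin) (hμ : ∀ x, μmin ≤ g.μ x) {p : ℝ} (hp : 2 ≤ p) {u φ : V → ℝ}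
    (hu : g.memE a lam u) (hφ : g.memE a lam φ) :
    HasDerivAt (fun s : ℝ => g.lpInt p (u + s • φ))
      (p * ∑' x, g.μ x * (|u x| ^ (p - 2) * u x * φ x)) 0 :=
  hasDerivAt_tsum_mul_abs_add_mul_rpow hp (fun x => (g.μpos x).le)
    (fun x => add_le_add (g.abs_le_sqrt_enormSq_div ha hlam hμmin hμ hu x)
      (g.abs_le_sqrt_enormSq_div ha hlam hμmin hμ hφ x))
    (g.summable_μ_mul_sq ha hlam hu) (g.summable_μ_mul_sq ha hlam hφ)

variable {p : ℝ}

lemma lpInt_smul (c : ℝ) (u : V → ℝ) : g.lpInt p (c • u) = |c| ^ p * g.lpInt p u := by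
  rw [lpInt, lpInt, ← tsum_mul_left]
  exact tsum_congr fun x => by
    rw [Pi.smul_apply, smul_eq_mul, abs_mul, Real.mul_rpow (abs_nonneg _) (abs_nonneg _)]
    ring

lemma Jlam_eq_of_mem_Nehari {u : V → ℝ} (hu : u ∈ g.Nehari a lam p) :
    g.Jlam a lam p u = (1 / 2 - 1 / p) * g.enormSq a lam u := by
  rw [Jlam, ← hu.2.2]
  ring

lemma rpow_smul_mem_Nehari (hp : 2 < p) {w : V → ℝ} (hw : g.memE a lam w)
    (hA : 0 < g.enormSq a lam w) (hB : 0 < g.lpInt p w) :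
    (g.enormSq a lam w / g.lpInt p w) ^ (p - 2)⁻¹ • w ∈ g.Nehari a lam p := by
  set t := (g.enormSq a lam w / g.lpInt p w) ^ (p - 2)⁻¹
  have ht : 0 < t := Real.rpow_pos_of_pos (div_pos hA hB) _
  have htp : t ^ p = t ^ 2 * (g.enormSq a lam w / g.lpInt p w) := by
    rw [← Real.rpow_inv_rpow (div_pos hA hB).le (sub_pos.2 hp).ne', ← Real.rpow_natCast,
      ← Real.rpow_add ht]
    norm_num
  have hw0 : w ≠ 0 := by
    rintro rfl
    simp [enormSq, lap, grad] at hA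
  refine ⟨smul_ne_zero ht.ne' hw0, g.memE_smul hw t, ?_⟩
  rw [enormSq_smul, lpInt_smul, abs_of_pos ht, htp]
  field_simp

lemma mul_log_enormSq_le_of_minimizer (ha : ∀ x, 0 ≤ a x) (hlam : 0 ≤ lam) (hp : 2 < p)
    {u : V → ℝ} (hu : u ∈ g.Nehari a lam p)
    (hmin : ∀ v ∈ g.Nehari a lam p, g.Jlam a lam p u ≤ g.Jlam a lam p v)
    {w : V → ℝ} (hw : g.memE a lam w) (hA : 0 < g.enormSq a lam w) (hB : 0 < g.lpInt p w) :
    (p - 2) * Real.log (g.enormSq a lam u)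
      ≤ p * Real.log (g.enormSq a lam w) - 2 * Real.log (g.lpInt p w) := by
  set t := (g.enormSq a lam w / g.lpInt p w) ^ (p - 2)⁻¹
  have ht : 0 < t := Real.rpow_pos_of_pos (div_pos hA hB) _
  have hv := g.rpow_smul_mem_Nehari hp hw hA hB
  have hle : g.enormSq a lam u ≤ t ^ 2 * g.enormSq a lam w := by
    have hJ := hmin _ hv
    rw [g.Jlam_eq_of_mem_Nehari hu, g.Jlam_eq_of_mem_Nehari hv, enormSq_smul] at hJ
    refine le_of_mul_le_mul_left hJ ?_
    rw [sub_pos]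
    exact one_div_lt_one_div_of_lt two_pos hp
  have hlog := Real.log_le_log (g.enormSq_pos ha hlam hu.2.1 hu.1) hle
  rw [Real.log_mul (pow_pos ht 2).ne' hA.ne', Real.log_pow, Real.log_rpow (div_pos hA hB),
    Real.log_div hA.ne' hB.ne', Nat.cast_ofNat] at hlog
  have hp2 : 0 < p - 2 := sub_pos.2 hp
  calc (p - 2) * Real.log (g.enormSq a lam u)
      ≤ (p - 2) * (2 * ((p - 2)⁻¹ * (Real.log (g.enormSq a lam w)
        - Real.log (g.lpInt p w))) + Real.log (g.enormSq a lam w)) :=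
        mul_le_mul_of_nonneg_left hlog hp2.le
    _ = _ := by field_simp; ring

end GraphData

theorem stmt9_general (g : GraphData V) (μmin lam p : ℝ) (hμmin : 0 < μmin)
    (hμ : ∀ x, μmin ≤ g.μ x)
    (a : V → ℝ) (ha : ∀ x, 0 ≤ a x) (hlam : 1 < lam) (hp : 2 < p)
    (u : V → ℝ) (hN : u ∈ g.Nehari a lam p)
    (hmin : ∀ v ∈ g.Nehari a lam p, g.Jlam a lam p u ≤ g.Jlam a lam p v) :
    ∀ φ, g.memE a lam φ → g.Jderiv a lam p u φ = 0 := by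
  intro φ hφ
  have hlam0 : 0 ≤ lam := by linarith
  set N := g.enormSq a lam u
  set A : ℝ → ℝ := fun s => g.enormSq a lam (u + s • φ)
  set B : ℝ → ℝ := fun s => g.lpInt p (u + s • φ)
  have hN0 : 0 < N := g.enormSq_pos ha hlam0 hN.2.1 hN.1
  have hA0 : A 0 = N := by simp [A, N]
  have hB0 : B 0 = N := by simp [B, N, hN.2.2]
  have hA : HasDerivAt A _ 0 := g.hasDerivAt_enormSq_add_smul ha hlam0 hN.2.1 hφ
  have hB : HasDerivAt B _ 0 := g.hasDerivAt_lpInt_add_smul ha hlam0 hμmin hμ hp.le hN.2.1 hφ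
  -- the Nehari projection of `u + s • φ` bounds `p log A - 2 log B` below by its value at `0`
  have hlocmin : IsLocalMin (fun s => p * Real.log (A s) - 2 * Real.log (B s)) 0 := by
    filter_upwards [hA.continuousAt.eventually (lt_mem_nhds (hA0 ▸ hN0)),
      hB.continuousAt.eventually (lt_mem_nhds (hB0 ▸ hN0))] with s hAs hBs
    rw [hA0, hB0]
    linarith [g.mul_log_enormSq_le_of_minimizer ha hlam0 hp hN hmin
      (g.memE_add_smul ha hlam0 hN.2.1 hφ s) hAs hBs]
  have hcrit := hlocmin.hasDerivAt_eq_zero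
    (((hA.log (hA0 ▸ hN0.ne')).const_mul p).sub ((hB.log (hB0 ▸ hN0.ne')).const_mul 2))
  rw [hA0, hB0] at hcrit
  set S := ∑' x, g.energyDensity a lam u φ x
  set T := ∑' x, g.μ x * (|u x| ^ (p - 2) * u x * φ x)
  have hJ : 2 * p / N * (S - T) = 0 := by
    rw [← hcrit]
    ring
  exact (mul_eq_zero.mp hJ).resolve_left (div_pos (by linarith) hN0).ne'

/-- a minimizer on the Nehari manifold is a critical point of J_λ. -/
theorem stmt9 (g : GraphData V) (μmin C lam p : ℝ) (hμmin : 0 < μmin)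
    (hμ : ∀ x, μmin ≤ g.μ x) (hω : ∀ x, ∑' y, g.ω x y ≤ C) (hconn : g.G.Connected)
    (a : V → ℝ) (ha : ∀ x, 0 ≤ a x) (hlam : 1 < lam) (hp : 2 < p)
    (u : V → ℝ) (hN : u ∈ g.Nehari a lam p)
    (hmin : ∀ v ∈ g.Nehari a lam p, g.Jlam a lam p u ≤ g.Jlam a lam p v) :
    ∀ φ, g.memE a lam φ → g.Jderiv a lam p u φ = 0 :=
  stmt9_general g μmin lam p hμmin hμ a ha hlam hp u hN hmin
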